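/- Let M, N ≥ 1 be such that M+1 divides N+1. Then there exists an injective group homomorphism from the sandpile group G_{Γ_M} on the M×M square domain to the sandpile group G_{Γ_N} on the N×N square domain. -/

import Mathlib

/-! Extend a function on `Γ_M` to `ℤ²` by odd reflection in every line `x ∈ (M + 1)ℤ` and
`y ∈ (M + 1)ℤ`. Reflection commutes with the Laplacian of `ℤ²`, and since `M + 1 ∣ N + 1` the
extension vanishes on the lines `0` and `N + 1` bordering `Γ_N`; hence extension followed by
restriction to `Γ_N` intertwines `Δ_{Γ_M}` with `Δ_{Γ_N}` and induces a homomorphism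
`G_{Γ_M} → G_{Γ_N}`. It is injective because the Laplacian of a finite domain is invertible over
`ℚ` (maximum principle): if the extension of `z` is `Δ_{Γ_N} g`, the extension of the rational
solution `q` of `Δ_{Γ_M} q = z` solves the same equation, hence equals `g`, so `q = g|Γ_M` is
integral. -/

/-- Two vertices of `ℤ²` are adjacent iff their Euclidean distance is `1`. -/
def adj (u v : ℤ × ℤ) : Prop := (u.1 - v.1) ^ 2 + (u.2 - v.2) ^ 2 = 1

instance : DecidableRel adj := fun u v => by unfold adj; infer_instance

/-- The reduced Laplacian of a finite domain `Γ ⊂ ℤ²`. -/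
def lap {R : Type*} [CommRing R] (Γ : Finset (ℤ × ℤ)) (f : ↥Γ → R) : ↥Γ → R :=
  fun v => (∑ w ∈ Γ.attach.filter (fun w => adj w.1 v.1), f w) - 4 * f v

lemma lap_add {R : Type*} [CommRing R] (Γ : Finset (ℤ × ℤ)) (f g : ↥Γ → R) :
    lap Γ (f + g) = lap Γ f + lap Γ g := by
  funext v; simp [lap, Finset.sum_add_distrib]; ring

lemma lap_neg {R : Type*} [CommRing R] (Γ : Finset (ℤ × ℤ)) (f : ↥Γ → R) :
    lap Γ (-f) = -(lap Γ f) := by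
  funext v; simp [lap]; ring

lemma lap_smul {R : Type*} [CommRing R] (Γ : Finset (ℤ × ℤ)) (c : R) (f : ↥Γ → R) :
    lap Γ (c • f) = c • lap Γ f := by
  funext v
  simp only [lap, Pi.smul_apply, smul_eq_mul, mul_sub, Finset.mul_sum]
  ring

lemma lap_zero {R : Type*} [CommRing R] (Γ : Finset (ℤ × ℤ)) :
    lap Γ (0 : ↥Γ → R) = 0 := by
  funext v; simp [lap]

/-- The boundary `∂Γ`: vertices of `Γ` adjacent to some vertex of `ℤ² \ Γ`. -/
noncomputable def boundary (Γ : Finset (ℤ × ℤ)) : Finset (ℤ × ℤ) :=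
  @Finset.filter _ (fun v => ∃ w : ℤ × ℤ, w ∉ Γ ∧ adj w v) (Classical.decPred _) Γ

lemma boundary_subset (Γ : Finset (ℤ × ℤ)) : boundary Γ ⊆ Γ :=
  @Finset.filter_subset _ (fun v => ∃ w : ℤ × ℤ, w ∉ Γ ∧ adj w v) (Classical.decPred _) Γ

/-- A function on `Γ` is harmonic if its Laplacian vanishes on the interior `Γ \ ∂Γ`. -/
def Harmonic {R : Type*} [CommRing R] (Γ : Finset (ℤ × ℤ)) (f : ↥Γ → R) : Prop :=
  ∀ v : ↥Γ, (v : ℤ × ℤ) ∉ boundary Γ → lap Γ f v = 0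

/-- `Γ ⊂ ℤ²` is a convex domain if it is the set of lattice points of a
convex open subset of `ℝ²`. -/
def IsConvexDomain (Γ : Finset (ℤ × ℤ)) : Prop :=
  ∃ P : Set (ℝ × ℝ), Convex ℝ P ∧ IsOpen P ∧
    ∀ v : ℤ × ℤ, v ∈ Γ ↔ ((v.1 : ℝ), (v.2 : ℝ)) ∈ P

/-- The reduced Laplacian as an additive group homomorphism on `ℤ^Γ`. -/
def lapHom (Γ : Finset (ℤ × ℤ)) : (↥Γ → ℤ) →+ (↥Γ → ℤ) where
  toFun := lap Γ
  map_zero' := lap_zero Γ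
  map_add' := lap_add Γ

/-- The sandpile group `G_Γ = ℤ^Γ / Δ_Γ(ℤ^Γ)`. -/
def SandpileGroup (Γ : Finset (ℤ × ℤ)) : Type :=
  (↥Γ → ℤ) ⧸ (lapHom Γ).range

instance (Γ : Finset (ℤ × ℤ)) : AddCommGroup (SandpileGroup Γ) :=
  inferInstanceAs (AddCommGroup ((↥Γ → ℤ) ⧸ (lapHom Γ).range))

/-- The canonical projection `ℤ^Γ → G_Γ`. -/
def sandMk (Γ : Finset (ℤ × ℤ)) : (↥Γ → ℤ) →+ SandpileGroup Γ :=
  QuotientAddGroup.mk' _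

/-- The `N×N` square domain `Γ_N = {1, …, N} × {1, …, N} ⊂ ℤ²`. -/
noncomputable def squareDomain (N : ℕ) : Finset (ℤ × ℤ) :=
  Finset.Icc 1 (N : ℤ) ×ˢ Finset.Icc 1 (N : ℤ)

open Finset

variable {R S : Type*} [CommRing R] [CommRing S]

section PlaneLaplacian

def nbrs (v : ℤ × ℤ) : Finset (ℤ × ℤ) :=
  {(v.1 + 1, v.2), (v.1 - 1, v.2), (v.1, v.2 + 1), (v.1, v.2 - 1)}

lemma Int.sq_add_sq_eq_one_iff {x y : ℤ} :
    x ^ 2 + y ^ 2 = 1 ↔ (x = 1 ∨ x = -1) ∧ y = 0 ∨ x = 0 ∧ (y = 1 ∨ y = -1) := by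
  constructor
  · intro h
    have hx : x ^ 2 ≤ 1 := by nlinarith [sq_nonneg y]
    have hy : y ^ 2 ≤ 1 := by nlinarith [sq_nonneg x]
    rw [sq_le_one_iff_abs_le_one, abs_le] at hx hy
    obtain ⟨hx₀, hx₁⟩ := hx
    obtain ⟨hy₀, hy₁⟩ := hy
    interval_cases x <;> interval_cases y <;> simp_all
  · rintro (⟨rfl | rfl, rfl⟩ | ⟨rfl, rfl | rfl⟩) <;> norm_num

lemma adj_iff_mem_nbrs {w v : ℤ × ℤ} : adj w v ↔ w ∈ nbrs v := by
  simp only [adj, Int.sq_add_sq_eq_one_iff, nbrs, mem_insert, mem_singleton, Prod.ext_iff]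
  omega

lemma sum_nbrs (Φ : ℤ × ℤ → R) (v : ℤ × ℤ) :
    ∑ w ∈ nbrs v, Φ w =
      Φ (v.1 + 1, v.2) + Φ (v.1 - 1, v.2) + Φ (v.1, v.2 + 1) + Φ (v.1, v.2 - 1) := by
  rw [nbrs, sum_insert, sum_insert, sum_insert, sum_singleton, ← add_assoc, ← add_assoc]
  all_goals simp only [mem_insert, mem_singleton, Prod.ext_iff]; omega

def planeLap (Φ : ℤ × ℤ → R) (v : ℤ × ℤ) : R :=
  ∑ w ∈ nbrs v, Φ w - 4 * Φ v

lemma planeLap_apply (Φ : ℤ × ℤ → R) (x y : ℤ) :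
    planeLap Φ (x, y) =
      Φ (x + 1, y) + Φ (x - 1, y) + Φ (x, y + 1) + Φ (x, y - 1) - 4 * Φ (x, y) := by
  rw [planeLap, sum_nbrs]

lemma lap_apply_eq_planeLap {Γ : Finset (ℤ × ℤ)} (Φ : ℤ × ℤ → R) (v : Γ)
    (hΦ : ∀ w ∈ nbrs v, w ∉ Γ → Φ w = 0) :
    lap Γ (fun w => Φ w) v = planeLap Φ v := by
  rw [lap, planeLap, sum_filter, sum_attach Γ fun w => if adj w v then Φ w else 0, ← sum_filter]
  congr 1
  refine sum_subset (fun w hw => adj_iff_mem_nbrs.1 (mem_filter.1 hw).2) fun w hw hwΓ => ?_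
  exact hΦ w hw fun h => hwΓ (mem_filter.2 ⟨h, adj_iff_mem_nbrs.2 hw⟩)

def zeroExtend (Γ : Finset (ℤ × ℤ)) (f : Γ → R) (p : ℤ × ℤ) : R :=
  if h : p ∈ Γ then f ⟨p, h⟩ else 0

lemma zeroExtend_coe {Γ : Finset (ℤ × ℤ)} (f : Γ → R) (v : Γ) : zeroExtend Γ f v = f v :=
  dif_pos v.2

lemma zeroExtend_of_notMem {Γ : Finset (ℤ × ℤ)} (f : Γ → R) {p : ℤ × ℤ} (hp : p ∉ Γ) :
    zeroExtend Γ f p = 0 :=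
  dif_neg hp

lemma lap_apply_eq_planeLap_zeroExtend {Γ : Finset (ℤ × ℤ)} (f : Γ → R) (v : Γ) :
    lap Γ f v = planeLap (zeroExtend Γ f) v := by
  simpa only [zeroExtend_coe] using
    lap_apply_eq_planeLap (zeroExtend Γ f) v fun _ _ => zeroExtend_of_notMem f

lemma lap_map {Γ : Finset (ℤ × ℤ)} (φ : R →+* S) (f : Γ → R) : lap Γ (φ ∘ f) = φ ∘ lap Γ f := by
  funext v
  simp [lap, map_sum, map_ofNat]

lemma zeroExtend_map {Γ : Finset (ℤ × ℤ)} (φ : R →+* S) (f : Γ → R) :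
    zeroExtend Γ (φ ∘ f) = φ ∘ zeroExtend Γ f := by
  funext p
  by_cases hp : p ∈ Γ <;> simp [zeroExtend, hp]

end PlaneLaplacian

section MaximumPrinciple

variable [LinearOrder R] [IsStrictOrderedRing R] {Γ : Finset (ℤ × ℤ)}

lemma le_zero_of_lap_eq_zero {f : Γ → R} (hf : lap Γ f = 0) (v : Γ) : f v ≤ 0 := by
  by_contra! hv
  obtain ⟨u₀, -, hu₀⟩ := Γ.attach.exists_max_image f ⟨v, mem_attach _ _⟩
  have hm : 0 < f u₀ := hv.trans_le (hu₀ v (mem_attach _ _))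
  -- among the maximisers, take one furthest to the right: its right neighbour is strictly lower
  obtain ⟨u, hu, hu_right⟩ := (Γ.attach.filter (f · = f u₀)).exists_max_image (fun w => w.1.1)
    ⟨u₀, mem_filter.2 ⟨mem_attach _ _, rfl⟩⟩
  have hfu : f u = f u₀ := (mem_filter.1 hu).2
  have hle : ∀ w, zeroExtend Γ f w ≤ f u₀ := fun w => by
    by_cases hw : w ∈ Γ
    · exact (zeroExtend_coe f ⟨w, hw⟩).trans_le (hu₀ _ (mem_attach _ _))
    · exact (zeroExtend_of_notMem f hw).trans_le hm.le
  have hlt : zeroExtend Γ f (u.1.1 + 1, u.1.2) < f u₀ := by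
    by_cases hw : (u.1.1 + 1, u.1.2) ∈ Γ
    · refine (zeroExtend_coe f ⟨_, hw⟩).trans_lt
        (lt_of_le_of_ne (hu₀ _ (mem_attach _ _)) fun h => ?_)
      have := hu_right ⟨_, hw⟩ (mem_filter.2 ⟨mem_attach _ _, h⟩)
      simp only at this
      omega
    · exact (zeroExtend_of_notMem f hw).trans_lt hm
  have hlap := congrFun hf u
  rw [Pi.zero_apply, lap_apply_eq_planeLap_zeroExtend, planeLap, sum_nbrs, zeroExtend_coe, hfu]
    at hlap
  linarith [hle (u.1.1 - 1, u.1.2), hle (u.1.1, u.1.2 + 1), hle (u.1.1, u.1.2 - 1)]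

lemma eq_zero_of_lap_eq_zero {f : Γ → R} (hf : lap Γ f = 0) : f = 0 := by
  funext v
  have hneg := le_zero_of_lap_eq_zero (f := -f) (by rw [lap_neg, hf, neg_zero]) v
  exact le_antisymm (le_zero_of_lap_eq_zero hf v) (by simpa using hneg)

end MaximumPrinciple

def lapLinear (𝕜 : Type*) [Field 𝕜] (Γ : Finset (ℤ × ℤ)) : (Γ → 𝕜) →ₗ[𝕜] (Γ → 𝕜) where
  toFun := lap Γ
  map_add' := lap_add Γ
  map_smul' := lap_smul Γ

lemma lap_bijective {𝕜 : Type*} [Field 𝕜] [LinearOrder 𝕜] [IsStrictOrderedRing 𝕜]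
    (Γ : Finset (ℤ × ℤ)) : Function.Bijective (lap Γ : (Γ → 𝕜) → Γ → 𝕜) := by
  have hinj : Function.Injective (lapLinear 𝕜 Γ) :=
    (injective_iff_map_eq_zero _).2 fun _ => eq_zero_of_lap_eq_zero
  exact ⟨hinj, LinearMap.injective_iff_surjective.1 hinj⟩

section OddPeriodic

variable {K : ℤ}

lemma eq_zero_of_odd_of_periodic {u : ℤ → R} (hK : 0 < K) (hodd : u.Odd)
    (hper : u.Periodic (2 * K)) (h : ∀ x, 0 ≤ x → x ≤ K → u x = 0) (x : ℤ) : u x = 0 := by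
  have hr₀ := Int.emod_nonneg x (by omega : 2 * K ≠ 0)
  have hr₁ := Int.emod_lt_of_pos x (by omega : 0 < 2 * K)
  rw [← hper.sub_int_mul_eq (x / (2 * K)), Int.cast_id,
    show x - x / (2 * K) * (2 * K) = x % (2 * K) by rw [Int.emod_def]; ring]
  rcases le_or_gt (x % (2 * K)) K with hle | hgt
  · exact h _ hr₀ hle
  · rw [← hper.sub_eq, ← neg_sub, hodd, h _ (by omega) (by omega), neg_zero]

structure IsOddPeriodic (K : ℤ) (Φ : ℤ × ℤ → R) : Prop where
  neg_fst : ∀ x y, Φ (-x, y) = -Φ (x, y)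
  neg_snd : ∀ x y, Φ (x, -y) = -Φ (x, y)
  add_fst : ∀ x y, Φ (x + 2 * K, y) = Φ (x, y)
  add_snd : ∀ x y, Φ (x, y + 2 * K) = Φ (x, y)

namespace IsOddPeriodic

variable {Φ Ψ : ℤ × ℤ → R}

lemma sub (hΦ : IsOddPeriodic K Φ) (hΨ : IsOddPeriodic K Ψ) : IsOddPeriodic K (Φ - Ψ) where
  neg_fst x y := by simp only [Pi.sub_apply, hΦ.neg_fst, hΨ.neg_fst]; ring
  neg_snd x y := by simp only [Pi.sub_apply, hΦ.neg_snd, hΨ.neg_snd]; ring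
  add_fst x y := by simp only [Pi.sub_apply, hΦ.add_fst, hΨ.add_fst]
  add_snd x y := by simp only [Pi.sub_apply, hΦ.add_snd, hΨ.add_snd]

lemma planeLap (hΦ : IsOddPeriodic K Φ) : IsOddPeriodic K (planeLap Φ) where
  neg_fst x y := by
    simp only [planeLap_apply, show -x + 1 = -(x - 1) by ring, show -x - 1 = -(x + 1) by ring,
      hΦ.neg_fst]
    ring
  neg_snd x y := by
    simp only [planeLap_apply, show -y + 1 = -(y - 1) by ring, show -y - 1 = -(y + 1) by ring,
      hΦ.neg_snd]
    ring
  add_fst x y := by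
    simp only [planeLap_apply, show x + 2 * K + 1 = x + 1 + 2 * K by ring,
      show x + 2 * K - 1 = x - 1 + 2 * K by ring, hΦ.add_fst]
  add_snd x y := by
    simp only [planeLap_apply, show y + 2 * K + 1 = y + 1 + 2 * K by ring,
      show y + 2 * K - 1 = y - 1 + 2 * K by ring, hΦ.add_snd]

lemma eq_zero (hΦ : IsOddPeriodic K Φ) (hK : 0 < K)
    (h : ∀ x y, 0 ≤ x → x ≤ K → 0 ≤ y → y ≤ K → Φ (x, y) = 0) : Φ = 0 := by
  have hcol : ∀ x y, 0 ≤ y → y ≤ K → Φ (x, y) = 0 := fun x y hy₀ hy₁ =>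
    eq_zero_of_odd_of_periodic (u := fun x => Φ (x, y)) hK (fun x => hΦ.neg_fst x y)
      (fun x => hΦ.add_fst x y) (fun x hx₀ hx₁ => h x y hx₀ hx₁ hy₀ hy₁) x
  funext ⟨x, y⟩
  exact eq_zero_of_odd_of_periodic (u := fun y => Φ (x, y)) hK (fun y => hΦ.neg_snd x y)
    (fun y => hΦ.add_snd x y) (hcol x) y

lemma add_one_add_sub_one_fst (hΦ : IsOddPeriodic K Φ) {x : ℤ} (hx : K ∣ x) (y : ℤ) :
    Φ (x + 1, y) + Φ (x - 1, y) = 0 := by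
  -- `x - 1 = 2x - (x + 1)`, and `2x` is a period
  obtain ⟨t, rfl⟩ := hx
  have hper := Function.Periodic.int_mul (f := fun x => Φ (x, y)) (fun x => hΦ.add_fst x y) t
    (-(K * t + 1))
  simp only [Int.cast_id] at hper
  rw [show K * t - 1 = -(K * t + 1) + t * (2 * K) by ring, hper, hΦ.neg_fst, add_neg_cancel]

lemma add_one_add_sub_one_snd (hΦ : IsOddPeriodic K Φ) (x : ℤ) {y : ℤ} (hy : K ∣ y) :
    Φ (x, y + 1) + Φ (x, y - 1) = 0 := by
  obtain ⟨t, rfl⟩ := hy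
  have hper := Function.Periodic.int_mul (f := fun y => Φ (x, y)) (fun y => hΦ.add_snd x y) t
    (-(K * t + 1))
  simp only [Int.cast_id] at hper
  rw [show K * t - 1 = -(K * t + 1) + t * (2 * K) by ring, hper, hΦ.neg_snd, add_neg_cancel]

end IsOddPeriodic

end OddPeriodic

section OddExtend

variable {K : ℤ}

/-- For `F` supported in `(0, K)²`, its extension by odd reflection in every line `x ∈ Kℤ` and
`y ∈ Kℤ`. -/
def oddExtend (K : ℤ) (F : ℤ × ℤ → R) (p : ℤ × ℤ) : R :=
  F (p.1 % (2 * K), p.2 % (2 * K)) - F (-p.1 % (2 * K), p.2 % (2 * K)) -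
    F (p.1 % (2 * K), -p.2 % (2 * K)) + F (-p.1 % (2 * K), -p.2 % (2 * K))

lemma isOddPeriodic_oddExtend (K : ℤ) (F : ℤ × ℤ → R) : IsOddPeriodic K (oddExtend K F) where
  neg_fst x y := by simp only [oddExtend, neg_neg]; ring
  neg_snd x y := by simp only [oddExtend, neg_neg]; ring
  add_fst x y := by simp only [oddExtend, neg_add, Int.add_emod_right, Int.add_neg_emod_self]
  add_snd x y := by simp only [oddExtend, neg_add, Int.add_emod_right, Int.add_neg_emod_self]

lemma neg_emod_two_mul_of_dvd {x : ℤ} (hx : K ∣ x) : -x % (2 * K) = x % (2 * K) :=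
  Int.modEq_iff_dvd.2 <| by
    rw [sub_neg_eq_add, ← two_mul]; exact mul_dvd_mul_left 2 hx

lemma oddExtend_of_dvd_fst (F : ℤ × ℤ → R) {x : ℤ} (hx : K ∣ x) (y : ℤ) :
    oddExtend K F (x, y) = 0 := by
  simp only [oddExtend, neg_emod_two_mul_of_dvd hx]; ring

lemma oddExtend_of_dvd_snd (F : ℤ × ℤ → R) (x : ℤ) {y : ℤ} (hy : K ∣ y) :
    oddExtend K F (x, y) = 0 := by
  simp only [oddExtend, neg_emod_two_mul_of_dvd hy]; ring

lemma oddExtend_apply_of_mem {F : ℤ × ℤ → R} (hK : 0 < K)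
    (hF : F.support ⊆ Set.Ioo 0 K ×ˢ Set.Ioo 0 K) {x y : ℤ} (hx₀ : 0 ≤ x) (hx₁ : x ≤ K)
    (hy₀ : 0 ≤ y) (hy₁ : y ≤ K) : oddExtend K F (x, y) = F (x, y) := by
  have emod_self : ∀ a, 0 ≤ a → a ≤ K → a % (2 * K) = a := fun a h₀ h₁ =>
    Int.emod_eq_of_lt h₀ (by omega)
  have neg_emod : ∀ a, 0 ≤ a → a ≤ K → -a % (2 * K) ∉ Set.Ioo 0 K := fun a h₀ h₁ => by
    rcases h₀.eq_or_lt with rfl | ha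
    · simp
    · rw [show -a = 2 * K - a + -1 * (2 * K) by ring, Int.add_mul_emod_self_right,
        Int.emod_eq_of_lt (by omega) (by omega)]
      simp only [Set.mem_Ioo, not_and, not_lt]
      omega
  have vanish : ∀ a b, a ∉ Set.Ioo 0 K ∨ b ∉ Set.Ioo 0 K → F (a, b) = 0 := fun a b h =>
    Function.notMem_support.1 fun hs => h.elim (· (hF hs).1) (· (hF hs).2)
  rw [oddExtend, emod_self x hx₀ hx₁, emod_self y hy₀ hy₁,
    vanish _ _ (.inl (neg_emod x hx₀ hx₁)), vanish _ _ (.inr (neg_emod y hy₀ hy₁)),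
    vanish _ _ (.inl (neg_emod x hx₀ hx₁))]
  ring

lemma planeLap_oddExtend_of_dvd_fst (F : ℤ × ℤ → R) {x : ℤ} (hx : K ∣ x) (y : ℤ) :
    planeLap (oddExtend K F) (x, y) = 0 := by
  rw [planeLap_apply, (isOddPeriodic_oddExtend K F).add_one_add_sub_one_fst hx,
    oddExtend_of_dvd_fst F hx, oddExtend_of_dvd_fst F hx, oddExtend_of_dvd_fst F hx]
  ring

lemma planeLap_oddExtend_of_dvd_snd (F : ℤ × ℤ → R) (x : ℤ) {y : ℤ} (hy : K ∣ y) :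
    planeLap (oddExtend K F) (x, y) = 0 := by
  rw [planeLap_apply, oddExtend_of_dvd_snd F _ hy, oddExtend_of_dvd_snd F _ hy,
    oddExtend_of_dvd_snd F _ hy]
  linear_combination (isOddPeriodic_oddExtend K F).add_one_add_sub_one_snd x hy

lemma oddExtend_map (K : ℤ) (φ : R →+* S) (F : ℤ × ℤ → R) :
    oddExtend K (φ ∘ F) = φ ∘ oddExtend K F := by
  funext p
  simp [oddExtend]

end OddExtend

section Square

lemma mem_squareDomain {M : ℕ} {p : ℤ × ℤ} :
    p ∈ squareDomain M ↔ p ∈ Set.Ioo 0 ((M : ℤ) + 1) ×ˢ Set.Ioo 0 ((M : ℤ) + 1) := by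
  simp only [squareDomain, mem_product, mem_Icc, Set.mem_prod, Set.mem_Ioo]
  omega

lemma squareDomain_mono {M N : ℕ} (h : M ≤ N) : squareDomain M ⊆ squareDomain N := fun p hp => by
  rw [mem_squareDomain] at hp ⊢
  simp only [Set.mem_prod, Set.mem_Ioo] at hp ⊢
  omega

lemma support_zeroExtend_squareDomain (M : ℕ) (f : squareDomain M → R) :
    (zeroExtend _ f).support ⊆ Set.Ioo 0 ((M : ℤ) + 1) ×ˢ Set.Ioo 0 ((M : ℤ) + 1) :=
  fun _ hp => mem_squareDomain.1 <| by_contra fun h => hp (zeroExtend_of_notMem f h)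

lemma planeLap_oddExtend_zeroExtend (M : ℕ) (f : squareDomain M → R) :
    planeLap (oddExtend (M + 1) (zeroExtend _ f)) =
      oddExtend (M + 1) (zeroExtend _ (lap (squareDomain M) f)) := by
  set K : ℤ := M + 1
  have hK : 0 < K := by positivity
  have hF := support_zeroExtend_squareDomain M f
  rw [← sub_eq_zero]
  refine ((isOddPeriodic_oddExtend K _).planeLap.sub (isOddPeriodic_oddExtend K _)).eq_zero hK
    fun x y hx₀ hx₁ hy₀ hy₁ => ?_
  rw [Pi.sub_apply, sub_eq_zero]
  by_cases hx : K ∣ x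
  · rw [planeLap_oddExtend_of_dvd_fst _ hx, oddExtend_of_dvd_fst _ hx]
  by_cases hy : K ∣ y
  · rw [planeLap_oddExtend_of_dvd_snd _ _ hy, oddExtend_of_dvd_snd _ _ hy]
  have hx' : 0 < x ∧ x < K := by
    refine ⟨hx₀.lt_of_ne ?_, hx₁.lt_of_ne ?_⟩ <;> rintro rfl <;> simp at hx
  have hy' : 0 < y ∧ y < K := by
    refine ⟨hy₀.lt_of_ne ?_, hy₁.lt_of_ne ?_⟩ <;> rintro rfl <;> simp at hy
  have hmem : (x, y) ∈ squareDomain M := mem_squareDomain.2 ⟨hx', hy'⟩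
  rw [oddExtend_apply_of_mem hK (support_zeroExtend_squareDomain M _) hx₀ hx₁ hy₀ hy₁,
    zeroExtend_coe _ ⟨_, hmem⟩, lap_apply_eq_planeLap_zeroExtend, planeLap_apply, planeLap_apply]
  rw [oddExtend_apply_of_mem hK hF, oddExtend_apply_of_mem hK hF, oddExtend_apply_of_mem hK hF,
    oddExtend_apply_of_mem hK hF, oddExtend_apply_of_mem hK hF]
  all_goals omega

variable (R) in
noncomputable def squareExtend (M N : ℕ) : (squareDomain M → R) →+ (squareDomain N → R) where
  toFun f v := oddExtend (M + 1) (zeroExtend _ f) v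
  map_zero' := by funext v; simp [oddExtend, zeroExtend]
  map_add' f g := by funext v; simp only [oddExtend, zeroExtend, Pi.add_apply]; split_ifs <;> ring

lemma squareExtend_eq {M N : ℕ} (f : squareDomain M → R) :
    squareExtend R M N f = fun v => oddExtend (M + 1) (zeroExtend _ f) v.1 :=
  rfl

lemma squareExtend_map {M N : ℕ} (φ : R →+* S) (f : squareDomain M → R) :
    squareExtend S M N (φ ∘ f) = φ ∘ squareExtend R M N f := by
  funext v
  simp only [squareExtend_eq, zeroExtend_map, oddExtend_map, Function.comp_apply]

lemma squareExtend_apply_of_mem {M N : ℕ} (f : squareDomain M → R) {p : ℤ × ℤ}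
    (hM : p ∈ squareDomain M) (hN : p ∈ squareDomain N) :
    squareExtend R M N f ⟨p, hN⟩ = f ⟨p, hM⟩ := by
  obtain ⟨x, y⟩ := p
  have h := mem_squareDomain.1 hM
  simp only [Set.mem_prod, Set.mem_Ioo] at h
  rw [squareExtend_eq, ← zeroExtend_coe f ⟨_, hM⟩]
  exact oddExtend_apply_of_mem (by positivity) (support_zeroExtend_squareDomain M f)
    (by omega) (by omega) (by omega) (by omega)

lemma lap_squareExtend {M N : ℕ} (hdvd : M + 1 ∣ N + 1) (f : squareDomain M → R) :
    lap (squareDomain N) (squareExtend R M N f) = squareExtend R M N (lap (squareDomain M) f) := by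
  have hdvd' : ((M : ℤ) + 1) ∣ (N : ℤ) + 1 := by exact_mod_cast hdvd
  funext v
  rw [squareExtend_eq, squareExtend_eq, ← planeLap_oddExtend_zeroExtend]
  refine lap_apply_eq_planeLap _ v fun w hw hwN => ?_
  obtain ⟨⟨x, y⟩, hv⟩ := v
  have hv' := mem_squareDomain.1 hv
  rw [mem_squareDomain] at hwN
  simp only [nbrs, mem_insert, mem_singleton, Set.mem_prod, Set.mem_Ioo] at hw hv' hwN
  have hcases : (w.1 = 0 ∨ w.1 = N + 1) ∨ (w.2 = 0 ∨ w.2 = N + 1) := by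
    rcases hw with rfl | rfl | rfl | rfl <;> omega
  rcases hcases with (h | h) | (h | h)
  · exact oddExtend_of_dvd_fst _ (h ▸ dvd_zero _) w.2
  · exact oddExtend_of_dvd_fst _ (h ▸ hdvd') w.2
  · exact oddExtend_of_dvd_snd _ w.1 (h ▸ dvd_zero _)
  · exact oddExtend_of_dvd_snd _ w.1 (h ▸ hdvd')

end Square

section Sandpile

variable {M N : ℕ}

lemma Nat.le_of_add_one_dvd_add_one {m n : ℕ} (h : m + 1 ∣ n + 1) : m ≤ n := by
  have := Nat.le_of_dvd n.succ_pos h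
  omega

lemma mem_range_lap_of_squareExtend_eq_lap (hdvd : M + 1 ∣ N + 1) {z : squareDomain M → ℤ}
    {g : squareDomain N → ℤ} (h : squareExtend ℤ M N z = lap _ g) :
    z ∈ (lapHom (squareDomain M)).range := by
  have hsub := squareDomain_mono (Nat.le_of_add_one_dvd_add_one hdvd)
  set ι := Int.castRingHom ℚ
  obtain ⟨q, hq⟩ := (lap_bijective (squareDomain M)).2 (ι ∘ z)
  have hext : squareExtend ℚ M N q = ι ∘ g := (lap_bijective _).1 <| by
    rw [lap_squareExtend hdvd, hq, squareExtend_map, h, lap_map]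
  have hq_int : q = ι ∘ fun v : squareDomain M => g ⟨v, hsub v.2⟩ := funext fun v => by
    rw [← squareExtend_apply_of_mem q v.2 (hsub v.2)]
    exact congrFun hext _
  refine ⟨fun v => g ⟨v, hsub v.2⟩, ι.injective_int.comp_left ?_⟩
  change ι ∘ lap _ _ = ι ∘ z
  rw [← hq, hq_int, lap_map]

noncomputable def sandpileExtend (hdvd : M + 1 ∣ N + 1) :
    SandpileGroup (squareDomain M) →+ SandpileGroup (squareDomain N) :=
  QuotientAddGroup.map _ _ (squareExtend ℤ M N) <| by
    rintro _ ⟨f, rfl⟩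
    exact ⟨squareExtend ℤ M N f, lap_squareExtend hdvd f⟩

lemma sandpileExtend_injective (hdvd : M + 1 ∣ N + 1) :
    Function.Injective (sandpileExtend hdvd) := by
  refine (injective_iff_map_eq_zero _).2 fun a ha => ?_
  obtain ⟨z, rfl⟩ := QuotientAddGroup.mk_surjective a
  obtain ⟨g, hg⟩ := (QuotientAddGroup.eq_zero_iff _).1 ha
  exact (QuotientAddGroup.eq_zero_iff _).2 (mem_range_lap_of_squareExtend_eq_lap hdvd hg.symm)

end Sandpile

theorem square_sandpile_monomorphism_general (M N : ℕ)
    (hdvd : (M + 1) ∣ (N + 1)) :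
    ∃ f : SandpileGroup (squareDomain M) →+ SandpileGroup (squareDomain N),
      Function.Injective f :=
  ⟨sandpileExtend hdvd, sandpileExtend_injective hdvd⟩

/-- If `M+1` divides `N+1`, there is an injective group
homomorphism from the sandpile group on the `M×M` square domain to the sandpile
group on the `N×N` square domain. -/
theorem square_sandpile_monomorphism (M N : ℕ) (hM : 1 ≤ M) (hN : 1 ≤ N)
    (hdvd : (M + 1) ∣ (N + 1)) :
    ∃ f : SandpileGroup (squareDomain M) →+ SandpileGroup (squareDomain N),
      Function.Injective f :=
  square_sandpile_monomorphism_general M N hdvd
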